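/- arXiv:2010.10559 — 11 statements merged into one kernel-verified Lean document; each statement's English description precedes it below -/
import Mathlib

section
/- For the (1D1B) setup, define the Lyapunov function V(p₁,p₂) = (K_d/4)·e₁₂d² + (K_b/2)·d₁₂·‖e₁₂b‖² and the closed-loop vector field F(p₁,p₂) = (K_d·e₁₂d·z₁₂, −K_b·e₁₂b) on ℝ² × ℝ². Then at every point (p₁,p₂) with p₁ ≠ p₂, V is differentiable and its derivative at (p₁,p₂) applied to the direction F(p₁,p₂) equals −‖K_b·e₁₂b + K_d·e₁₂d·z₁₂‖², which is ≤ 0; i.e., along the closed-loop dynamics V̇ = −‖ż₁₂‖². -/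
/-!
`V` depends on `(p₁, p₂)` only through the link `z = p₂ - p₁`, say `V = U ∘ (p ↦ z)`, and the
closed loop moves the link by `ż = -∇U(z)`. For a unit bearing `g`, away from `z = 0` the bearing
term satisfies `‖z‖ ‖z/‖z‖ - g‖² = 2 (‖z‖ - ⟪g, z⟫)`, whose gradient is `2 (z/‖z‖ - g)`; hence
`∇U(z) = K_d e_d z + K_b e_b` and `V̇ = ⟪∇U(z), ż⟫ = -‖ż‖²`.
-/

open scoped RealInnerProductSpace

section

variable {E : Type*} [NormedAddCommGroup E] [InnerProductSpace ℝ E]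

theorem hasFDerivAt_norm_of_ne_zero {z : E} (hz : z ≠ 0) :
    HasFDerivAt (‖·‖) (‖z‖⁻¹ • innerSL ℝ z) z := by
  have hsqrt := (hasStrictFDerivAt_norm_sq z).hasFDerivAt.sqrt (by positivity)
  simp only [Real.sqrt_sq (norm_nonneg _)] at hsqrt
  convert hsqrt using 1
  rw [← Nat.cast_smul_eq_nsmul ℝ, smul_smul]
  congr 1
  field_simp
  norm_num

theorem norm_mul_norm_inv_smul_sub_sq {g z : E} (hg : ‖g‖ = 1) (hz : z ≠ 0) :
    ‖z‖ * ‖‖z‖⁻¹ • z - g‖ ^ 2 = 2 * (‖z‖ - ⟪g, z⟫) := by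
  rw [norm_sub_sq_real, norm_smul, real_inner_smul_left, norm_inv, norm_norm, hg,
    real_inner_comm]
  field_simp
  ring

theorem hasFDerivAt_norm_mul_norm_inv_smul_sub_sq {g z : E} (hg : ‖g‖ = 1) (hz : z ≠ 0) :
    HasFDerivAt (fun x : E => ‖x‖ * ‖‖x‖⁻¹ • x - g‖ ^ 2)
      ((2 : ℝ) • innerSL ℝ (‖z‖⁻¹ • z - g)) z := by
  have hlin : HasFDerivAt (fun x : E => 2 * (‖x‖ - ⟪g, x⟫))
      ((2 : ℝ) • (‖z‖⁻¹ • innerSL ℝ z - innerSL ℝ g)) z :=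
    ((hasFDerivAt_norm_of_ne_zero hz).sub (innerSL ℝ g).hasFDerivAt).const_mul 2
  refine (hlin.congr_of_eventuallyEq ?_).congr_fderiv ?_
  · filter_upwards [isOpen_ne.mem_nhds hz] with x hx
    exact norm_mul_norm_inv_smul_sub_sq hg hx
  · simp [map_sub, map_smul]

theorem hasFDerivAt_norm_sq_sub_sq (c : ℝ) (z : E) :
    HasFDerivAt (fun x : E => (‖x‖ ^ 2 - c) ^ 2) ((4 * (‖z‖ ^ 2 - c)) • innerSL ℝ z) z := by
  refine (((hasStrictFDerivAt_norm_sq z).hasFDerivAt.sub_const c).pow 2).congr_fderiv ?_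
  rw [← Nat.cast_smul_eq_nsmul ℝ, ← Nat.cast_smul_eq_nsmul ℝ, smul_smul]
  norm_num
  ring_nf

noncomputable def linkLyapunov (Kd Kb dstar : ℝ) (g z : E) : ℝ :=
  (Kd / 4) * (‖z‖ ^ 2 - dstar ^ 2) ^ 2 + (Kb / 2) * ‖z‖ * ‖‖z‖⁻¹ • z - g‖ ^ 2

noncomputable def linkLyapunovGradient (Kd Kb dstar : ℝ) (g z : E) : E :=
  Kb • (‖z‖⁻¹ • z - g) + (Kd * (‖z‖ ^ 2 - dstar ^ 2)) • z

theorem hasFDerivAt_linkLyapunov (Kd Kb dstar : ℝ) {g z : E} (hg : ‖g‖ = 1) (hz : z ≠ 0) :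
    HasFDerivAt (linkLyapunov Kd Kb dstar g)
      (innerSL ℝ (linkLyapunovGradient Kd Kb dstar g z)) z := by
  have h := ((hasFDerivAt_norm_sq_sub_sq (dstar ^ 2) z).const_mul (Kd / 4)).add
    ((hasFDerivAt_norm_mul_norm_inv_smul_sub_sq hg hz).const_mul (Kb / 2))
  refine (h.congr_fderiv ?_).congr_of_eventuallyEq (.of_forall fun x => ?_)
  · ext x
    simp only [linkLyapunovGradient, map_add, map_sub, map_smul, add_apply,
      sub_apply, smul_apply, coe_innerSL_apply, smul_eq_mul]
    ring
  · simp only [linkLyapunov, Pi.add_apply, mul_assoc]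

end

theorem stmt_3_general (Kd Kb dstar : ℝ)
    (gstar : EuclideanSpace ℝ (Fin 2)) (hgstar : ‖gstar‖ = 1)
    (V : EuclideanSpace ℝ (Fin 2) × EuclideanSpace ℝ (Fin 2) → ℝ)
    (hV : V = fun q =>
      (Kd / 4) * (‖q.2 - q.1‖ ^ 2 - dstar ^ 2) ^ 2 +
      (Kb / 2) * ‖q.2 - q.1‖ * ‖‖q.2 - q.1‖⁻¹ • (q.2 - q.1) - gstar‖ ^ 2)
    (F : EuclideanSpace ℝ (Fin 2) × EuclideanSpace ℝ (Fin 2) →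
      EuclideanSpace ℝ (Fin 2) × EuclideanSpace ℝ (Fin 2))
    (hF : F = fun q =>
      ((Kd * (‖q.2 - q.1‖ ^ 2 - dstar ^ 2)) • (q.2 - q.1),
       (-Kb) • (‖q.2 - q.1‖⁻¹ • (q.2 - q.1) - gstar)))
    (p₁ p₂ : EuclideanSpace ℝ (Fin 2)) (hp : p₁ ≠ p₂) :
    DifferentiableAt ℝ V (p₁, p₂) ∧
    fderiv ℝ V (p₁, p₂) (F (p₁, p₂)) =
      -‖Kb • (‖p₂ - p₁‖⁻¹ • (p₂ - p₁) - gstar) +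
        (Kd * (‖p₂ - p₁‖ ^ 2 - dstar ^ 2)) • (p₂ - p₁)‖ ^ 2 ∧
    fderiv ℝ V (p₁, p₂) (F (p₁, p₂)) ≤ 0 := by
  set G := linkLyapunovGradient Kd Kb dstar gstar (p₂ - p₁)
  have hVderiv : HasFDerivAt V ((innerSL ℝ G).comp
      (ContinuousLinearMap.snd ℝ _ _ - ContinuousLinearMap.fst ℝ _ _)) (p₁, p₂) := by
    subst hV
    exact (hasFDerivAt_linkLyapunov Kd Kb dstar hgstar (sub_ne_zero.mpr hp.symm)).comp (p₁, p₂)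
      (hasFDerivAt_snd.sub hasFDerivAt_fst : HasFDerivAt (fun q : _ × _ => q.2 - q.1) _ (p₁, p₂))
  have hlink : (F (p₁, p₂)).2 - (F (p₁, p₂)).1 = -G := by
    subst hF
    simp only [G, linkLyapunovGradient]
    module
  have hVdot : fderiv ℝ V (p₁, p₂) (F (p₁, p₂)) = -‖G‖ ^ 2 := by
    rw [hVderiv.fderiv]
    change ⟪G, (F (p₁, p₂)).2 - (F (p₁, p₂)).1⟫ = _
    rw [hlink, inner_neg_right, real_inner_self_eq_norm_sq]
  exact ⟨hVderiv.differentiableAt, hVdot, hVdot ▸ neg_nonpos.mpr (sq_nonneg _)⟩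

/-- the Lyapunov function of the (1D1B) setup is differentiable
away from collisions and its derivative along the closed-loop vector field
equals `−‖ż₁₂‖² = −‖K_b·e₁₂b + K_d·e₁₂d·z₁₂‖² ≤ 0`. -/
theorem stmt_3 (Kd Kb dstar : ℝ) (hKd : 0 < Kd) (hKb : 0 < Kb) (hdstar : 0 < dstar)
    (gstar : EuclideanSpace ℝ (Fin 2)) (hgstar : ‖gstar‖ = 1)
    (V : EuclideanSpace ℝ (Fin 2) × EuclideanSpace ℝ (Fin 2) → ℝ)
    (hV : V = fun q =>
      (Kd / 4) * (‖q.2 - q.1‖ ^ 2 - dstar ^ 2) ^ 2 +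
      (Kb / 2) * ‖q.2 - q.1‖ * ‖‖q.2 - q.1‖⁻¹ • (q.2 - q.1) - gstar‖ ^ 2)
    (F : EuclideanSpace ℝ (Fin 2) × EuclideanSpace ℝ (Fin 2) →
      EuclideanSpace ℝ (Fin 2) × EuclideanSpace ℝ (Fin 2))
    (hF : F = fun q =>
      ((Kd * (‖q.2 - q.1‖ ^ 2 - dstar ^ 2)) • (q.2 - q.1),
       (-Kb) • (‖q.2 - q.1‖⁻¹ • (q.2 - q.1) - gstar)))
    (p₁ p₂ : EuclideanSpace ℝ (Fin 2)) (hp : p₁ ≠ p₂) :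
    DifferentiableAt ℝ V (p₁, p₂) ∧
    fderiv ℝ V (p₁, p₂) (F (p₁, p₂)) =
      -‖Kb • (‖p₂ - p₁‖⁻¹ • (p₂ - p₁) - gstar) +
        (Kd * (‖p₂ - p₁‖ ^ 2 - dstar ^ 2)) • (p₂ - p₁)‖ ^ 2 ∧
    fderiv ℝ V (p₁, p₂) (F (p₁, p₂)) ≤ 0 :=
  stmt_3_general Kd Kb dstar gstar hgstar V hV F hF p₁ p₂ hp
end

section
/- In the (1D1B) setup, suppose the link is stationary, i.e. K_b·e₁₂b + K_d·e₁₂d·z₁₂ = 0. Then exactly one of the following holds: (i) g₁₂ = g₁₂* and e₁₂d = 0 (an equilibrium configuration), or (ii) g₁₂ = −g₁₂* and d₁₂·e₁₂d = −2K_b/K_d; moreover, in case (ii) both robots move with the common constant velocity w = 2K_b·g₁₂*, that is, K_d·e₁₂d·z₁₂ = 2K_b·g₁₂* = −K_b·e₁₂b. -/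
/-! Writing `z = ‖z‖ • g` with `g = ‖z‖⁻¹ • z`, stationarity reads
`(K_b + K_d e_d ‖z‖) • g = K_b • g*`.
Comparing norms of these multiples of unit vectors forces `K_b + K_d e_d ‖z‖ = ±K_b`,
which gives the equilibrium configuration for `+` and the moving one, with `g = -g*`, for `-`. -/

section Normed

variable {E : Type*} [NormedAddCommGroup E] [NormedSpace ℝ E]

lemma norm_smul_inv_norm_smul (z : E) : ‖z‖ • (‖z‖⁻¹ • z) = z := by
  rcases eq_or_ne z 0 with rfl | hz
  · simp
  · rw [smul_smul, mul_inv_cancel₀ (norm_ne_zero_iff.mpr hz), one_smul]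

lemma eq_or_eq_neg_of_smul_eq_smul_of_norm_eq_one {a k : ℝ} {g u : E} (hg : ‖g‖ = 1)
    (hu : ‖u‖ = 1) (hk : k ≠ 0) (h : a • g = k • u) :
    (a = k ∧ g = u) ∨ (a = -k ∧ g = -u) := by
  have habs : |a| = |k| := by simpa [norm_smul, hg, hu] using congrArg norm h
  rcases abs_eq_abs.mp habs with rfl | rfl
  · exact .inl ⟨rfl, smul_right_injective E hk h⟩
  · refine .inr ⟨rfl, smul_right_injective E hk ?_⟩
    change k • g = k • -u
    rw [smul_neg, ← h, neg_smul, neg_neg]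

theorem stationary_link_cases {k c : ℝ} {z u : E} (hk : 0 < k) (hu : ‖u‖ = 1)
    (h : k • (‖z‖⁻¹ • z - u) + c • z = 0) :
    z ≠ 0 ∧ ((‖z‖⁻¹ • z = u ∧ c * ‖z‖ = 0) ∨ (‖z‖⁻¹ • z = -u ∧ c * ‖z‖ = -(2 * k))) := by
  have hz : z ≠ 0 := by
    rintro rfl
    have : k • u = 0 := by simpa using h
    rcases smul_eq_zero.mp this with hk0 | rfl
    · exact hk.ne' hk0
    · simp at hu
  have key : (k + c * ‖z‖) • (‖z‖⁻¹ • z) = k • u := by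
    conv_lhs => rw [add_smul, mul_smul, norm_smul_inv_norm_smul]
    linear_combination (norm := module) h
  refine ⟨hz, ?_⟩
  rcases eq_or_eq_neg_of_smul_eq_smul_of_norm_eq_one (norm_smul_inv_norm hz) hu hk.ne' key
    with ⟨hc, hg⟩ | ⟨hc, hg⟩
  · exact .inl ⟨hg, by linarith⟩
  · exact .inr ⟨hg, by linarith⟩

end Normed

theorem stmt_4_general (Kd Kb : ℝ) (hKd : 0 < Kd) (hKb : 0 < Kb)
    (gstar : EuclideanSpace ℝ (Fin 2)) (hgstar : ‖gstar‖ = 1)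
    (z : EuclideanSpace ℝ (Fin 2))
    (d : ℝ) (hd : d = ‖z‖)
    (g : EuclideanSpace ℝ (Fin 2)) (hgg : g = d⁻¹ • z)
    (ed : ℝ)
    (eb : EuclideanSpace ℝ (Fin 2)) (heb : eb = g - gstar)
    (hstat : Kb • eb + (Kd * ed) • z = 0) :
    Xor' (g = gstar ∧ ed = 0)
      (g = -gstar ∧ d * ed = -(2 * Kb) / Kd ∧
        (Kd * ed) • z = (2 * Kb) • gstar ∧ (Kd * ed) • z = (-Kb) • eb) := by
  subst hd hgg heb
  have hgstar_ne : gstar ≠ -gstar := fun h => by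
    have : (2 : ℝ) • gstar = 0 := by linear_combination (norm := module) h
    simpa [norm_smul, hgstar] using congrArg norm this
  obtain ⟨hz, ⟨hg, hc⟩ | ⟨hg, hc⟩⟩ := stationary_link_cases (c := Kd * ed) hKb hgstar hstat
  · have hed : ed = 0 := by simpa [hKd.ne', hz] using hc
    exact .inl ⟨⟨hg, hed⟩, fun ⟨hg', _⟩ => hgstar_ne (hg ▸ hg')⟩
  · have hed : ed ≠ 0 := by rintro rfl; linarith
    refine .inr ⟨⟨hg, ?_, ?_, ?_⟩, fun ⟨_, hed'⟩ => hed hed'⟩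
    · field_simp
      linarith
    · rw [← norm_smul_inv_norm_smul z, hg, smul_smul, hc]
      module
    · linear_combination (norm := module) hstat

/-- if the (1D1B) link is stationary, then exactly one of the
following holds: (i) it is an equilibrium configuration, or (ii) it is a moving
configuration, in which case both robots move with velocity `w = 2K_b·g₁₂*`. -/
theorem stmt_4 (Kd Kb dstar : ℝ) (hKd : 0 < Kd) (hKb : 0 < Kb) (hdstar : 0 < dstar)
    (gstar : EuclideanSpace ℝ (Fin 2)) (hgstar : ‖gstar‖ = 1)
    (p₁ p₂ : EuclideanSpace ℝ (Fin 2)) (hp : p₁ ≠ p₂)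
    (z : EuclideanSpace ℝ (Fin 2)) (hz : z = p₂ - p₁)
    (d : ℝ) (hd : d = ‖z‖)
    (g : EuclideanSpace ℝ (Fin 2)) (hgg : g = d⁻¹ • z)
    (ed : ℝ) (hed : ed = d ^ 2 - dstar ^ 2)
    (eb : EuclideanSpace ℝ (Fin 2)) (heb : eb = g - gstar)
    (hstat : Kb • eb + (Kd * ed) • z = 0) :
    Xor' (g = gstar ∧ ed = 0)
      (g = -gstar ∧ d * ed = -(2 * Kb) / Kd ∧
        (Kd * ed) • z = (2 * Kb) • gstar ∧ (Kd * ed) • z = (-Kb) • eb) :=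
  stmt_4_general Kd Kb hKd hKb gstar hgstar z d hd g hgg ed eb heb hstat
end

section
/- Let K_b, K_d > 0, let d > 0, and let g ∈ ℝ² be a unit vector (‖g‖ = 1). Consider the 2×2 real matrix A = −(K_b·(1/d)·(I₂ − g·gᵀ) + K_d·(e_d·I₂ + 2·z·zᵀ)) where z = d·g and e_d = −2·(K_b/K_d)/d (this is the Jacobian of the (1D1B) link dynamics at a point of the moving set, where g₁₂ = −g₁₂* and d₁₂·e₁₂d = −2K_b/K_d). Then the eigenvalues of A are λ₁ = K_b/d and λ₂ = 2·K_b/d − 2·K_d·d²; in particular A has the positive eigenvalue K_b/d > 0, so the linearization at every point of the moving set is unstable. -/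
open Polynomial Matrix

/-!
At a point of the moving set the Jacobian is `(K_b/d) I + (K_b/d − 2 K_d d²) g gᵀ`: the
bearing term contributes `−(K_b/d)(I − g gᵀ)`, the distance term `2(K_b/d) I − 2 K_d d² g gᵀ`.
For a unit vector `g`, the matrix `a I + b g gᵀ` acts as `a` on `g^⊥` and as `a + b` on `g`.
-/

theorem Matrix.charpoly_smul_one_add_smul_vecMulVec_fin_two {R : Type*} [CommRing R]
    [Nontrivial R] (a b : R) (g : Fin 2 → R) (hg : g ⬝ᵥ g = 1) :
    (a • (1 : Matrix (Fin 2) (Fin 2) R) + b • vecMulVec g g).charpoly =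
      (X - C a) * (X - C (a + b)) := by
  have hg' : g 0 * g 0 + g 1 * g 1 = 1 := by simpa [dotProduct, Fin.sum_univ_two] using hg
  have htrace : (a • (1 : Matrix (Fin 2) (Fin 2) R) + b • vecMulVec g g).trace = a + (a + b) := by
    simp only [trace_fin_two, add_apply, smul_apply, one_apply_eq, vecMulVec_apply, smul_eq_mul]
    linear_combination b * hg'
  have hdet : (a • (1 : Matrix (Fin 2) (Fin 2) R) + b • vecMulVec g g).det = a * (a + b) := by
    simp only [det_fin_two, add_apply, smul_apply, one_apply_eq, one_apply_ne zero_ne_one,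
      one_apply_ne one_ne_zero, vecMulVec_apply, smul_eq_mul]
    linear_combination a * b * hg'
  rw [charpoly_fin_two, htrace, hdet, C_add, C_mul]
  ring

theorem linkJacobian_eq_smul_one_add_smul_vecMulVec (Kb Kd d : ℝ) (hKd : Kd ≠ 0) (hd : d ≠ 0)
    (g : Fin 2 → ℝ) :
    -((Kb * (1 / d)) • ((1 : Matrix (Fin 2) (Fin 2) ℝ) - vecMulVec g g) +
        Kd • ((-(2 * (Kb / Kd)) / d) • (1 : Matrix (Fin 2) (Fin 2) ℝ) +
          (2 : ℝ) • vecMulVec (d • g) (d • g))) =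
      (Kb / d) • (1 : Matrix (Fin 2) (Fin 2) ℝ) + (Kb / d - 2 * Kd * d ^ 2) • vecMulVec g g := by
  have hed : Kd * (-(2 * (Kb / Kd)) / d) = -2 * (Kb / d) := by field_simp
  simp only [smul_vecMulVec, vecMulVec_smul, smul_add, smul_smul, hed]
  module

/-- the Jacobian of the (1D1B) link dynamics at a point of the
moving set has eigenvalues `K_b/d` and `2K_b/d − 2K_d·d²`; in particular it has
the positive eigenvalue `K_b/d`, so the moving set is unstable. -/
theorem stmt_5 (Kd Kb d : ℝ) (hKd : 0 < Kd) (hKb : 0 < Kb) (hd : 0 < d)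
    (g : Fin 2 → ℝ) (hg : g 0 ^ 2 + g 1 ^ 2 = 1)
    (z : Fin 2 → ℝ) (hz : z = d • g)
    (ed : ℝ) (hed : ed = -(2 * (Kb / Kd)) / d)
    (A : Matrix (Fin 2) (Fin 2) ℝ)
    (hA : A = -((Kb * (1 / d)) • ((1 : Matrix (Fin 2) (Fin 2) ℝ) - Matrix.vecMulVec g g) +
        Kd • (ed • (1 : Matrix (Fin 2) (Fin 2) ℝ) + (2 : ℝ) • Matrix.vecMulVec z z))) :
    A.charpoly = (X - C (Kb / d)) * (X - C (2 * Kb / d - 2 * Kd * d ^ 2)) ∧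
    0 < Kb / d := by
  have hunit : g ⬝ᵥ g = 1 := by simpa [dotProduct, Fin.sum_univ_two, ← sq] using hg
  subst hz hed hA
  rw [linkJacobian_eq_smul_one_add_smul_vecMulVec Kb Kd d hKd.ne' hd.ne' g,
    charpoly_smul_one_add_smul_vecMulVec_fin_two _ _ g hunit]
  exact ⟨by congr 3; ring, by positivity⟩
end

section
/- In the (1D2B) setup, the closed-loop system is at an equilibrium if and only if all errors vanish; precisely: K_d·e₁₂d·z₁₂ + K_d·e₁₃d·z₁₃ = 0, −K_b·e₁₂b = 0 and −K_b·e₁₃b = 0 hold simultaneously if and only if e₁₂d = 0, e₁₃d = 0, g₁₂ = g₁₂* and g₁₃ = g₁₃*. -/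
/-!
At an equilibrium the bearing robots are at rest, so both bearing errors vanish and
`z₁ⱼ = d₁ⱼ • g₁ⱼ*`. The velocity of the distance robot then becomes a combination of the two
desired bearings, which are linearly independent since they are unit vectors that are neither
equal nor opposite; hence both coefficients `K_d e₁ⱼd d₁ⱼ` vanish, and `d₁ⱼ ≠ 0` forces
`e₁ⱼd = 0`.
-/

theorem linearIndependent_pair_of_norm_eq_one {E : Type*} [NormedAddCommGroup E]
    [NormedSpace ℝ E] {u v : E} (hu : ‖u‖ = 1) (hv : ‖v‖ = 1) (huv : u ≠ v) (huv' : u ≠ -v) :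
    LinearIndependent ℝ ![u, v] := by
  refine (LinearIndependent.pair_iff' (norm_ne_zero_iff.1 (hu ▸ one_ne_zero))).2 fun a hav => ?_
  have ha : |a| = 1 := by simpa [hu, hv, norm_smul] using congrArg norm hav
  rcases abs_eq zero_le_one |>.1 ha with rfl | rfl
  · exact huv (by simpa using hav)
  · exact huv' (by simp [← hav])

theorem norm_smul_eq_self_of_inv_norm_smul_eq {E : Type*} [NormedAddCommGroup E]
    [NormedSpace ℝ E] {z g : E} (hz : z ≠ 0) (hg : ‖z‖⁻¹ • z = g) : ‖z‖ • g = z := by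
  rw [← hg, smul_inv_smul₀ (norm_ne_zero_iff.2 hz)]

theorem stmt_8_general (Kd Kb d12s d13s : ℝ) (hKd : 0 < Kd) (hKb : 0 < Kb)
    (g12s g13s : EuclideanSpace ℝ (Fin 2))
    (hg12s : ‖g12s‖ = 1) (hg13s : ‖g13s‖ = 1)
    (hne : g12s ≠ g13s) (hne' : g12s ≠ -g13s)
    (p₁ p₂ p₃ : EuclideanSpace ℝ (Fin 2)) (hp12 : p₁ ≠ p₂) (hp13 : p₁ ≠ p₃)
    (z12 z13 : EuclideanSpace ℝ (Fin 2)) (hz12 : z12 = p₂ - p₁) (hz13 : z13 = p₃ - p₁)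
    (d12 d13 : ℝ) (hd12 : d12 = ‖z12‖) (hd13 : d13 = ‖z13‖)
    (g12 g13 : EuclideanSpace ℝ (Fin 2)) (hg12 : g12 = d12⁻¹ • z12) (hg13 : g13 = d13⁻¹ • z13)
    (e12d e13d : ℝ) (he12d : e12d = d12 ^ 2 - d12s ^ 2) (he13d : e13d = d13 ^ 2 - d13s ^ 2)
    (e12b e13b : EuclideanSpace ℝ (Fin 2))
    (he12b : e12b = g12 - g12s) (he13b : e13b = g13 - g13s) :
    ((Kd * e12d) • z12 + (Kd * e13d) • z13 = 0 ∧ (-Kb) • e12b = 0 ∧ (-Kb) • e13b = 0) ↔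
      (e12d = 0 ∧ e13d = 0 ∧ g12 = g12s ∧ g13 = g13s) := by
  have hindep := linearIndependent_pair_of_norm_eq_one hg12s hg13s hne hne'
  have hz12ne : z12 ≠ 0 := hz12 ▸ sub_ne_zero.2 hp12.symm
  have hz13ne : z13 ≠ 0 := hz13 ▸ sub_ne_zero.2 hp13.symm
  subst he12b he13b hg12 hg13 hd12 hd13
  simp only [smul_eq_zero, neg_eq_zero, hKb.ne', false_or, sub_eq_zero]
  constructor
  · rintro ⟨hrest, h12, h13⟩
    rw [← norm_smul_eq_self_of_inv_norm_smul_eq hz12ne h12,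
      ← norm_smul_eq_self_of_inv_norm_smul_eq hz13ne h13, smul_smul, smul_smul] at hrest
    obtain ⟨hc12, hc13⟩ := LinearIndependent.pair_iff.1 hindep _ _ hrest
    exact ⟨by simpa [hKd.ne', hz12ne] using hc12, by simpa [hKd.ne', hz13ne] using hc13, h12, h13⟩
  · rintro ⟨rfl, rfl, h12, h13⟩
    simp [h12, h13]

/-- equilibria of the (1D2B) closed loop are exactly the
configurations where all distance and bearing errors vanish. -/
theorem stmt_8 (Kd Kb d12s d13s : ℝ) (hKd : 0 < Kd) (hKb : 0 < Kb)
    (hd12s : 0 < d12s) (hd13s : 0 < d13s)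
    (g12s g13s : EuclideanSpace ℝ (Fin 2))
    (hg12s : ‖g12s‖ = 1) (hg13s : ‖g13s‖ = 1)
    (hne : g12s ≠ g13s) (hne' : g12s ≠ -g13s)
    (p₁ p₂ p₃ : EuclideanSpace ℝ (Fin 2)) (hp12 : p₁ ≠ p₂) (hp13 : p₁ ≠ p₃)
    (z12 z13 : EuclideanSpace ℝ (Fin 2)) (hz12 : z12 = p₂ - p₁) (hz13 : z13 = p₃ - p₁)
    (d12 d13 : ℝ) (hd12 : d12 = ‖z12‖) (hd13 : d13 = ‖z13‖)
    (g12 g13 : EuclideanSpace ℝ (Fin 2)) (hg12 : g12 = d12⁻¹ • z12) (hg13 : g13 = d13⁻¹ • z13)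
    (e12d e13d : ℝ) (he12d : e12d = d12 ^ 2 - d12s ^ 2) (he13d : e13d = d13 ^ 2 - d13s ^ 2)
    (e12b e13b : EuclideanSpace ℝ (Fin 2))
    (he12b : e12b = g12 - g12s) (he13b : e13b = g13 - g13s) :
    ((Kd * e12d) • z12 + (Kd * e13d) • z13 = 0 ∧ (-Kb) • e12b = 0 ∧ (-Kb) • e13b = 0) ↔
      (e12d = 0 ∧ e13d = 0 ∧ g12 = g12s ∧ g13 = g13s) :=
  stmt_8_general Kd Kb d12s d13s hKd hKb g12s g13s hg12s hg13s hne hne' p₁ p₂ p₃ hp12 hp13 z12 z13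
    hz12 hz13 d12 d13 hd12 hd13 g12 g13 hg12 hg13 e12d e13d he12d he13d e12b e13b he12b he13b
end

section
/- In the (1D2B) setup, suppose both links are stationary, i.e. K_b·e₁₂b + K_d·e₁₂d·z₁₂ + K_d·e₁₃d·z₁₃ = 0 and K_b·e₁₃b + K_d·e₁₂d·z₁₂ + K_d·e₁₃d·z₁₃ = 0. Then exactly one of the following holds: (i) e₁₂d = 0, e₁₃d = 0, g₁₂ = g₁₂* and g₁₃ = g₁₃* (an equilibrium configuration), or (ii) g₁₂ = −g₁₃*, g₁₃ = −g₁₂*, d₁₂·e₁₂d = −K_b/K_d and d₁₃·e₁₃d = −K_b/K_d; moreover, in case (ii) all three robots move with the common constant velocity w = K_b·(g₁₂* + g₁₃*). -/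
/-! Write `v = a g₁₂ + b g₁₃` for the velocity of robot 1, where `a = K_d e₁₂d d₁₂` and
`b = K_d e₁₃d d₁₃`. Subtracting the two stationarity equations gives
`g₁₂ - g₁₃ = g₁₂* - g₁₃*`, and this difference is orthogonal both to `g₁₂ + g₁₃` and to
`g₁₂* + g₁₃*` because all four bearings are unit vectors. Projecting the sum of the two
equations onto it forces `a = b`, after which the sum reads
`(K_b + 2a) (g₁₂ + g₁₃) = K_b (g₁₂* + g₁₃*)`. By the parallelogram law `g₁₂ + g₁₃` and
`g₁₂* + g₁₃*` have the same nonzero length, so `K_b + 2a = ± K_b`: either `a = 0` (the equilibrium) or `a = -K_b`,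
which flips the sum of the bearings and yields the moving configuration. -/

open scoped InnerProductSpace

section Normed

variable {E : Type*} [NormedAddCommGroup E] [NormedSpace ℝ E]

theorem sub_polar_form {p q z g : E} {d : ℝ} (hpq : p ≠ q) (hz : z = q - p)
    (hd : d = ‖z‖) (hg : g = d⁻¹ • z) : 0 < d ∧ ‖g‖ = 1 ∧ z = d • g := by
  have hz0 : z ≠ 0 := by rw [hz, sub_ne_zero]; exact hpq.symm
  subst hd hg
  exact ⟨norm_pos_iff.mpr hz0, norm_smul_inv_norm hz0,
    by rw [smul_smul, mul_inv_cancel₀ (norm_ne_zero_iff.mpr hz0), one_smul]⟩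

theorem eq_and_eq_or_eq_neg_and_eq_neg_of_smul_eq_smul {x y : E} {c k : ℝ}
    (hxy : ‖x‖ = ‖y‖) (hy : y ≠ 0) (hk : k ≠ 0) (h : c • x = k • y) :
    (c = k ∧ x = y) ∨ (c = -k ∧ x = -y) := by
  have hck : |c| = |k| := by
    have := congrArg norm h
    rw [norm_smul, norm_smul, hxy, Real.norm_eq_abs, Real.norm_eq_abs] at this
    exact mul_right_cancel₀ (norm_ne_zero_iff.mpr hy) this
  rcases abs_eq_abs.mp hck with hc | hc <;> rw [hc] at h
  · exact Or.inl ⟨hc, smul_right_injective E hk h⟩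
  · refine Or.inr ⟨hc, smul_right_injective E hk ?_⟩
    change k • x = k • -y
    linear_combination (norm := module) -h

end Normed

section InnerProduct

variable {E : Type*} [NormedAddCommGroup E] [InnerProductSpace ℝ E]

theorem norm_add_eq_of_sub_eq_of_norm_eq_one {u w u' w' : E} (hu : ‖u‖ = 1) (hw : ‖w‖ = 1)
    (hu' : ‖u'‖ = 1) (hw' : ‖w'‖ = 1) (hsub : u - w = u' - w') : ‖u + w‖ = ‖u' + w'‖ := by
  have h := parallelogram_law_with_norm ℝ u w
  have h' := parallelogram_law_with_norm ℝ u' w'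
  rw [hu, hw] at h
  rw [hu', hw', ← hsub] at h'
  exact (pow_left_inj₀ (norm_nonneg _) (norm_nonneg _) two_ne_zero).mp (by linarith)

theorem stationary_bearings_dichotomy {u w u' w' : E} {k a b : ℝ} (hk : k ≠ 0)
    (hu : ‖u‖ = 1) (hw : ‖w‖ = 1) (hu' : ‖u'‖ = 1) (hw' : ‖w'‖ = 1)
    (hne : u' ≠ w') (hne' : u' ≠ -w')
    (h₁ : k • (u - u') + a • u + b • w = 0) (h₂ : k • (w - w') + a • u + b • w = 0) :
    (a = 0 ∧ b = 0 ∧ u = u' ∧ w = w') ∨ (a = -k ∧ b = -k ∧ u = -w' ∧ w = -u') := by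
  have hsub : u - w = u' - w' :=
    smul_right_injective E hk (by linear_combination (norm := module) h₁ - h₂)
  have hsum : (k + a + b) • (u + w) + (a - b) • (u - w) = k • (u' + w') := by
    linear_combination (norm := module) h₁ + h₂
  have hab : a = b := by
    have horth : ⟪u + w, u - w⟫_ℝ = 0 := (real_inner_add_sub_eq_zero_iff u w).mpr (hu.trans hw.symm)
    have horth' : ⟪u' + w', u - w⟫_ℝ = 0 := by
      rw [hsub]; exact (real_inner_add_sub_eq_zero_iff u' w').mpr (hu'.trans hw'.symm)
    have hproj := congrArg (fun x => ⟪x, u - w⟫_ℝ) hsum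
    simp only [inner_add_left, real_inner_smul_left, horth, horth', real_inner_self_eq_norm_sq,
      mul_zero, zero_add] at hproj
    have hnorm : ‖u - w‖ ≠ 0 := by rw [hsub, norm_ne_zero_iff, sub_ne_zero]; exact hne
    have := (mul_eq_zero.mp hproj).resolve_right (pow_ne_zero 2 hnorm)
    linarith
  subst hab
  have hsum' : (k + 2 * a) • (u + w) = k • (u' + w') := by
    linear_combination (norm := module) hsum
  have hsum_ne : u' + w' ≠ 0 := fun h => hne' (eq_neg_of_add_eq_zero_left h)
  rcases eq_and_eq_or_eq_neg_and_eq_neg_of_smul_eq_smul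
      (norm_add_eq_of_sub_eq_of_norm_eq_one hu hw hu' hw' hsub) hsum_ne hk hsum'
    with ⟨hc, hadd⟩ | ⟨hc, hadd⟩
  · have ha : a = 0 := by linarith
    refine Or.inl ⟨ha, ha, ?_, ?_⟩
    · linear_combination (norm := module) (1 / 2 : ℝ) • (hadd + hsub)
    · linear_combination (norm := module) (1 / 2 : ℝ) • (hadd - hsub)
  · have ha : a = -k := by linarith
    refine Or.inr ⟨ha, ha, ?_, ?_⟩
    · linear_combination (norm := module) (1 / 2 : ℝ) • (hadd + hsub)
    · linear_combination (norm := module) (1 / 2 : ℝ) • (hadd - hsub)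

end InnerProduct

theorem stmt_9_general (Kd Kb : ℝ) (hKd : 0 < Kd) (hKb : 0 < Kb)
    (g12s g13s : EuclideanSpace ℝ (Fin 2))
    (hg12s : ‖g12s‖ = 1) (hg13s : ‖g13s‖ = 1)
    (hne : g12s ≠ g13s) (hne' : g12s ≠ -g13s)
    (p₁ p₂ p₃ : EuclideanSpace ℝ (Fin 2)) (hp12 : p₁ ≠ p₂) (hp13 : p₁ ≠ p₃)
    (z12 z13 : EuclideanSpace ℝ (Fin 2)) (hz12 : z12 = p₂ - p₁) (hz13 : z13 = p₃ - p₁)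
    (d12 d13 : ℝ) (hd12 : d12 = ‖z12‖) (hd13 : d13 = ‖z13‖)
    (g12 g13 : EuclideanSpace ℝ (Fin 2)) (hg12 : g12 = d12⁻¹ • z12) (hg13 : g13 = d13⁻¹ • z13)
    (e12d e13d : ℝ)
    (e12b e13b : EuclideanSpace ℝ (Fin 2))
    (he12b : e12b = g12 - g12s) (he13b : e13b = g13 - g13s)
    (hstat12 : Kb • e12b + (Kd * e12d) • z12 + (Kd * e13d) • z13 = 0)
    (hstat13 : Kb • e13b + (Kd * e12d) • z12 + (Kd * e13d) • z13 = 0) :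
    Xor' (e12d = 0 ∧ e13d = 0 ∧ g12 = g12s ∧ g13 = g13s)
      (g12 = -g13s ∧ g13 = -g12s ∧
        d12 * e12d = -Kb / Kd ∧ d13 * e13d = -Kb / Kd ∧
        (Kd * e12d) • z12 + (Kd * e13d) • z13 = Kb • (g12s + g13s) ∧
        (-Kb) • e12b = Kb • (g12s + g13s) ∧
        (-Kb) • e13b = Kb • (g12s + g13s)) := by
  obtain ⟨hd12pos, hg12n, hz12g⟩ := sub_polar_form hp12 hz12 hd12 hg12
  obtain ⟨hd13pos, hg13n, hz13g⟩ := sub_polar_form hp13 hz13 hd13 hg13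
  have hv12 : (Kd * e12d) • z12 = (Kd * e12d * d12) • g12 := by rw [hz12g, smul_smul]
  have hv13 : (Kd * e13d) • z13 = (Kd * e13d * d13) • g13 := by rw [hz13g, smul_smul]
  rw [he12b, hv12, hv13] at hstat12
  rw [he13b, hv12, hv13] at hstat13
  have hKbKd : -Kb / Kd ≠ 0 := div_ne_zero (neg_ne_zero.mpr hKb.ne') hKd.ne'
  refine (xor_iff_or_and_not_and _ _).mpr
    ⟨?_, fun ⟨⟨h12, _⟩, ⟨_, _, h12', _⟩⟩ => hKbKd (by rw [← h12', h12, mul_zero])⟩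
  rcases stationary_bearings_dichotomy hKb.ne' hg12n hg13n hg12s hg13s hne hne' hstat12 hstat13
    with ⟨ha, hb, rfl, rfl⟩ | ⟨ha, hb, rfl, rfl⟩
  · left
    simp only [mul_eq_zero, hKd.ne', hd12pos.ne', hd13pos.ne', or_false, false_or] at ha hb
    exact ⟨ha, hb, rfl, rfl⟩
  · right
    refine ⟨rfl, rfl, ?_, ?_, ?_, ?_, ?_⟩
    · rw [eq_div_iff hKd.ne']; linarith
    · rw [eq_div_iff hKd.ne']; linarith
    · rw [hv12, hv13, ha, hb]; module
    · rw [he12b]; module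
    · rw [he13b]; module

/-- if both links of the (1D2B) setup are stationary, then
exactly one of the following holds: (i) equilibrium configuration, or
(ii) moving configuration, in which case all three robots move with the common
constant velocity `w = K_b·(g₁₂* + g₁₃*)`. -/
theorem stmt_9 (Kd Kb d12s d13s : ℝ) (hKd : 0 < Kd) (hKb : 0 < Kb)
    (hd12s : 0 < d12s) (hd13s : 0 < d13s)
    (g12s g13s : EuclideanSpace ℝ (Fin 2))
    (hg12s : ‖g12s‖ = 1) (hg13s : ‖g13s‖ = 1)
    (hne : g12s ≠ g13s) (hne' : g12s ≠ -g13s)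
    (p₁ p₂ p₃ : EuclideanSpace ℝ (Fin 2)) (hp12 : p₁ ≠ p₂) (hp13 : p₁ ≠ p₃)
    (z12 z13 : EuclideanSpace ℝ (Fin 2)) (hz12 : z12 = p₂ - p₁) (hz13 : z13 = p₃ - p₁)
    (d12 d13 : ℝ) (hd12 : d12 = ‖z12‖) (hd13 : d13 = ‖z13‖)
    (g12 g13 : EuclideanSpace ℝ (Fin 2)) (hg12 : g12 = d12⁻¹ • z12) (hg13 : g13 = d13⁻¹ • z13)
    (e12d e13d : ℝ) (he12d : e12d = d12 ^ 2 - d12s ^ 2) (he13d : e13d = d13 ^ 2 - d13s ^ 2)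
    (e12b e13b : EuclideanSpace ℝ (Fin 2))
    (he12b : e12b = g12 - g12s) (he13b : e13b = g13 - g13s)
    (hstat12 : Kb • e12b + (Kd * e12d) • z12 + (Kd * e13d) • z13 = 0)
    (hstat13 : Kb • e13b + (Kd * e12d) • z12 + (Kd * e13d) • z13 = 0) :
    Xor' (e12d = 0 ∧ e13d = 0 ∧ g12 = g12s ∧ g13 = g13s)
      (g12 = -g13s ∧ g13 = -g12s ∧
        d12 * e12d = -Kb / Kd ∧ d13 * e13d = -Kb / Kd ∧
        (Kd * e12d) • z12 + (Kd * e13d) • z13 = Kb • (g12s + g13s) ∧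
        (-Kb) • e12b = Kb • (g12s + g13s) ∧
        (-Kb) • e13b = Kb • (g12s + g13s)) :=
  stmt_9_general Kd Kb hKd hKb g12s g13s hg12s hg13s hne hne' p₁ p₂ p₃ hp12 hp13 z12 z13 hz12 hz13
    d12 d13 hd12 hd13 g12 g13 hg12 hg13 e12d e13d e12b e13b he12b he13b hstat12 hstat13
end

section
/- Let x*, y*, p*, q* > 0 be real numbers and let (a,b), (c,d) ∈ ℝ² be unit vectors (a² + b² = 1, c² + d² = 1) with s := a·d − b·c ≠ 0. Consider the 4×4 real matrix A_E = −D − M, where D = diag(x*, x*, p*, p*) and M is the matrix with rows [(y*−x*)a², (y*−x*)ab, q*c², q*cd], [(y*−x*)ab, (y*−x*)b², q*cd, q*d²], [y*a², y*ab, (q*−p*)c², (q*−p*)cd], [y*ab, y*b², (q*−p*)cd, (q*−p*)d²]. Then the characteristic polynomial of A_E equals (λ + x*)(λ + p*)(λ² + (y* + q*)λ + y*·q*·s²), all eigenvalues of A_E are real, and all eigenvalues of A_E are negative; in particular A_E is Hurwitz. -/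
open Polynomial

/-!
Expanding `det (t - A)` and reducing modulo the unit-norm relations `a² + b² = 1`,
`c² + d² = 1` gives the factorization of the characteristic polynomial. By Lagrange's identity
`s² ≤ 1`, so the quadratic factor has discriminant `(y + q)² - 4 y q s² ≥ (y - q)² ≥ 0` and its
roots are real; their sum `-(y + q)` is negative and their product `y q s²` positive, so both
are negative.
-/

theorem Matrix.det_fin_four {R : Type*} [CommRing R] (M : Matrix (Fin 4) (Fin 4) R) :
    M.det =
      M 0 0 * (M 1 1 * (M 2 2 * M 3 3 - M 2 3 * M 3 2) - M 1 2 * (M 2 1 * M 3 3 - M 2 3 * M 3 1)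
        + M 1 3 * (M 2 1 * M 3 2 - M 2 2 * M 3 1))
      - M 0 1 * (M 1 0 * (M 2 2 * M 3 3 - M 2 3 * M 3 2) - M 1 2 * (M 2 0 * M 3 3 - M 2 3 * M 3 0)
        + M 1 3 * (M 2 0 * M 3 2 - M 2 2 * M 3 0))
      + M 0 2 * (M 1 0 * (M 2 1 * M 3 3 - M 2 3 * M 3 1) - M 1 1 * (M 2 0 * M 3 3 - M 2 3 * M 3 0)
        + M 1 3 * (M 2 0 * M 3 1 - M 2 1 * M 3 0))
      - M 0 3 * (M 1 0 * (M 2 1 * M 3 2 - M 2 2 * M 3 1) - M 1 1 * (M 2 0 * M 3 2 - M 2 2 * M 3 0)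
        + M 1 2 * (M 2 0 * M 3 1 - M 2 1 * M 3 0)) := by
  rw [det_succ_row_zero, Fin.sum_univ_four]
  simp only [det_fin_three, submatrix_apply, Fin.succAbove, Fin.coe_ofNat_eq_mod, Fin.reduceSucc,
    Fin.reduceCastSucc, Fin.reduceLT, ↓reduceIte]
  ring

theorem sq_mul_sub_mul_le_one {a b c d : ℝ} (hab : a ^ 2 + b ^ 2 = 1) (hcd : c ^ 2 + d ^ 2 = 1) :
    (a * d - b * c) ^ 2 ≤ 1 := by
  have lagrange :
      (a ^ 2 + b ^ 2) * (c ^ 2 + d ^ 2) = (a * c + b * d) ^ 2 + (a * d - b * c) ^ 2 := by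
    ring
  rw [hab, hcd] at lagrange
  linarith [sq_nonneg (a * c + b * d)]

theorem Complex.im_eq_zero_and_re_neg_of_sq_add_mul_add_eq_zero {β γ : ℝ} (hβ : 0 < β)
    (hγ : 0 < γ) (hdisc : 4 * γ ≤ β ^ 2) {z : ℂ} (hz : z ^ 2 + β * z + γ = 0) :
    z.im = 0 ∧ z.re < 0 := by
  have hre : z.re ^ 2 - z.im ^ 2 + β * z.re + γ = 0 := by
    simpa [sq] using congrArg Complex.re hz
  have him : z.im * (2 * z.re + β) = 0 := by
    have := congrArg Complex.im hz
    simp only [sq, add_im, mul_im, ofReal_re, ofReal_im, zero_im] at this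
    linear_combination this
  have hz_im : z.im = 0 := by
    by_contra hne
    have hvertex : 2 * z.re + β = 0 := (mul_eq_zero.mp him).resolve_left hne
    nlinarith [sq_pos_of_ne_zero hne]
  refine ⟨hz_im, ?_⟩
  rw [hz_im] at hre
  nlinarith

def linkJacobian (x y p q a b c d : ℝ) : Matrix (Fin 4) (Fin 4) ℝ :=
  -(Matrix.diagonal ![x, x, p, p]) -
      !![(y - x) * a ^ 2, (y - x) * (a * b), q * c ^ 2, q * (c * d);
         (y - x) * (a * b), (y - x) * b ^ 2, q * (c * d), q * d ^ 2;
         y * a ^ 2, y * (a * b), (q - p) * c ^ 2, (q - p) * (c * d);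
         y * (a * b), y * b ^ 2, (q - p) * (c * d), (q - p) * d ^ 2]

theorem eval_charpoly_linkJacobian {x y p q a b c d : ℝ} (hab : a ^ 2 + b ^ 2 = 1)
    (hcd : c ^ 2 + d ^ 2 = 1) (t : ℝ) :
    (linkJacobian x y p q a b c d).charpoly.eval t =
      (t + x) * (t + p) * (t ^ 2 + (y + q) * t + y * q * (a * d - b * c) ^ 2) := by
  rw [Matrix.eval_charpoly, Matrix.det_fin_four]
  simp only [linkJacobian, Matrix.scalar_apply, Matrix.diagonal_neg, Matrix.sub_apply,
    Matrix.diagonal_apply_eq, Matrix.diagonal_apply_ne, ne_eq, Fin.reduceEq, not_false_eq_true,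
    Matrix.of_apply, Matrix.cons_val', Matrix.cons_val, Matrix.cons_val_fin_one]
  linear_combination (t + x) * (t + p) * (((y - x) * t - q * x) * hab +
    ((q - p) * t - y * p + (x * p - x * q - y * p) * (a ^ 2 + b ^ 2 - 1)) * hcd)

theorem charpoly_linkJacobian {x y p q a b c d : ℝ} (hab : a ^ 2 + b ^ 2 = 1)
    (hcd : c ^ 2 + d ^ 2 = 1) :
    (linkJacobian x y p q a b c d).charpoly =
      (X + C x) * (X + C p) * (X ^ 2 + C (y + q) * X + C (y * q * (a * d - b * c) ^ 2)) :=
  Polynomial.funext fun t => by simp [eval_charpoly_linkJacobian hab hcd]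

theorem eq_neg_or_eq_neg_or_sq_add_mul_add_eq_zero_of_isRoot {x p β γ : ℝ} {z : ℂ}
    (h : (((X + C x) * (X + C p) * (X ^ 2 + C β * X + C γ)).map (algebraMap ℝ ℂ)).IsRoot z) :
    z = -x ∨ z = -p ∨ z ^ 2 + β * z + γ = 0 := by
  simp only [Polynomial.map_mul, Polynomial.map_add, Polynomial.map_pow, map_X, map_C,
    Complex.coe_algebraMap, IsRoot.def, eval_mul, eval_add, eval_pow, eval_X, eval_C,
    mul_eq_zero] at h
  rcases h with (hx | hp) | hquad
  · exact Or.inl (eq_neg_of_add_eq_zero_left hx)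
  · exact Or.inr (Or.inl (eq_neg_of_add_eq_zero_left hp))
  · exact Or.inr (Or.inr hquad)

/-- the Jacobian of the (1D2B) link dynamics at the desired
equilibrium has characteristic polynomial
`(λ + x*)(λ + p*)(λ² + (y* + q*)λ + y*q*s²)`, and all its eigenvalues are real
and negative; in particular it is Hurwitz. -/
theorem stmt_10 (x y p q a b c d : ℝ)
    (hx : 0 < x) (hy : 0 < y) (hp : 0 < p) (hq : 0 < q)
    (hab : a ^ 2 + b ^ 2 = 1) (hcd : c ^ 2 + d ^ 2 = 1)
    (s : ℝ) (hs : s = a * d - b * c) (hs0 : s ≠ 0)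
    (A : Matrix (Fin 4) (Fin 4) ℝ)
    (hA : A = -(Matrix.diagonal ![x, x, p, p]) -
      !![(y - x) * a ^ 2, (y - x) * (a * b), q * c ^ 2, q * (c * d);
         (y - x) * (a * b), (y - x) * b ^ 2, q * (c * d), q * d ^ 2;
         y * a ^ 2, y * (a * b), (q - p) * c ^ 2, (q - p) * (c * d);
         y * (a * b), y * b ^ 2, (q - p) * (c * d), (q - p) * d ^ 2]) :
    A.charpoly = (X + C x) * (X + C p) * (X ^ 2 + C (y + q) * X + C (y * q * s ^ 2)) ∧
    (∀ μ : ℂ, ((A.map (algebraMap ℝ ℂ)).charpoly).IsRoot μ → μ.im = 0 ∧ μ.re < 0) := by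
  have hchar :
      A.charpoly = (X + C x) * (X + C p) * (X ^ 2 + C (y + q) * X + C (y * q * s ^ 2)) := by
    rw [hA, hs]
    exact charpoly_linkJacobian hab hcd
  refine ⟨hchar, fun μ hμ => ?_⟩
  rw [Matrix.charpoly_map, hchar] at hμ
  rcases eq_neg_or_eq_neg_or_sq_add_mul_add_eq_zero_of_isRoot hμ with rfl | rfl | hquad
  · simpa using hx
  · simpa using hp
  · refine Complex.im_eq_zero_and_re_neg_of_sq_add_mul_add_eq_zero (add_pos hy hq)
      (mul_pos (mul_pos hy hq) (sq_pos_of_ne_zero hs0)) ?_ hquad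
    have hs_le : s ^ 2 ≤ 1 := hs ▸ sq_mul_sub_mul_le_one hab hcd
    nlinarith [sq_nonneg (y - q), mul_pos hy hq]
end

section
/- In the (1B2D) setup, the closed-loop system is at an equilibrium if and only if both distance errors vanish and the bearings are either correct or flipped; precisely: K_b·e₁₂b + K_b·e₁₃b = 0, −K_d·e₁₂d·z₁₂ = 0 and −K_d·e₁₃d·z₁₃ = 0 hold simultaneously if and only if e₁₂d = 0, e₁₃d = 0, and either (g₁₂ = g₁₂* and g₁₃ = g₁₃*) or (g₁₂ = g₁₃* and g₁₃ = g₁₂*). -/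
/-!
Equating the distance terms to zero forces the distance errors to vanish, since `z₁ⱼ ≠ 0`.
The bearing term vanishes iff `g₁₂ + g₁₃ = g₁₂* + g₁₃* =: s`. For unit vectors `a, b` the
difference `a - b` is orthogonal to `a + b` and has squared norm `4 - ‖a + b‖²`, so
`g₁₂ - g₁₃` and `g₁₂* - g₁₃*` are orthogonal to `s ≠ 0` and have equal norms. In the plane
the orthogonal complement of `s` is a line, so `g₁₂ - g₁₃ = ±(g₁₂* - g₁₃*)`, which together
with the common sum gives the correct or the flipped bearings.
-/

open Module RealInnerProductSpace

variable {E : Type*} [NormedAddCommGroup E] [InnerProductSpace ℝ E]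

theorem eq_or_eq_neg_of_inner_eq_zero_of_norm_eq [Fact (finrank ℝ E = 2)] {s x y : E}
    (hs : s ≠ 0) (hx : ⟪s, x⟫ = 0) (hy : ⟪s, y⟫ = 0) (hxy : ‖x‖ = ‖y‖) :
    x = y ∨ x = -y := by
  rcases eq_or_ne y 0 with rfl | hy₀
  · simp_all
  obtain ⟨t, rfl⟩ := Submodule.mem_span_singleton.mp
    (Submodule.mem_span_singleton_of_inner_eq_zero_of_inner_eq_zero hs hy₀ hx hy)
  have ht : |t| = 1 := by
    rw [norm_smul, Real.norm_eq_abs] at hxy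
    exact (mul_eq_right₀ (norm_ne_zero_iff.mpr hy₀)).mp hxy
  rcases (abs_eq zero_le_one).mp ht with rfl | rfl <;> simp

theorem norm_sub_sq_eq_of_norm_eq_one {a b : E} (ha : ‖a‖ = 1) (hb : ‖b‖ = 1) :
    ‖a - b‖ ^ 2 = 4 - ‖a + b‖ ^ 2 := by
  have := parallelogram_law_with_norm ℝ a b
  rw [ha, hb] at this
  nlinarith

theorem add_eq_add_iff_of_norm_eq_one [Fact (finrank ℝ E = 2)] {a b c d : E}
    (ha : ‖a‖ = 1) (hb : ‖b‖ = 1) (hc : ‖c‖ = 1) (hd : ‖d‖ = 1) (hcd : c + d ≠ 0) :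
    a + b = c + d ↔ (a = c ∧ b = d) ∨ (a = d ∧ b = c) := by
  refine ⟨fun hsum => ?_, ?_⟩
  · have hab_perp : ⟪c + d, a - b⟫ = 0 := by
      rw [← hsum, real_inner_add_sub_eq_zero_iff, ha, hb]
    have hcd_perp : ⟪c + d, c - d⟫ = 0 := by
      rw [real_inner_add_sub_eq_zero_iff, hc, hd]
    have hnorm : ‖a - b‖ = ‖c - d‖ := by
      rw [← sq_eq_sq₀ (norm_nonneg _) (norm_nonneg _), norm_sub_sq_eq_of_norm_eq_one ha hb,
        norm_sub_sq_eq_of_norm_eq_one hc hd, hsum]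
    rcases eq_or_eq_neg_of_inner_eq_zero_of_norm_eq hcd hab_perp hcd_perp hnorm with h | h
    · left
      constructor
      · linear_combination (norm := module) (2⁻¹ : ℝ) • (hsum + h)
      · linear_combination (norm := module) (2⁻¹ : ℝ) • (hsum - h)
    · right
      constructor
      · linear_combination (norm := module) (2⁻¹ : ℝ) • (hsum + h)
      · linear_combination (norm := module) (2⁻¹ : ℝ) • (hsum - h)
  · rintro (⟨rfl, rfl⟩ | ⟨rfl, rfl⟩)
    · rfl
    · exact add_comm _ _

theorem stmt_13_general (Kd Kb : ℝ) (hKd : 0 < Kd) (hKb : 0 < Kb)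
    (g12s g13s : EuclideanSpace ℝ (Fin 2))
    (hg12s : ‖g12s‖ = 1) (hg13s : ‖g13s‖ = 1)
    (hne' : g12s ≠ -g13s)
    (p₁ p₂ p₃ : EuclideanSpace ℝ (Fin 2)) (hp12 : p₁ ≠ p₂) (hp13 : p₁ ≠ p₃)
    (z12 z13 : EuclideanSpace ℝ (Fin 2)) (hz12 : z12 = p₂ - p₁) (hz13 : z13 = p₃ - p₁)
    (d12 d13 : ℝ) (hd12 : d12 = ‖z12‖) (hd13 : d13 = ‖z13‖)
    (g12 g13 : EuclideanSpace ℝ (Fin 2)) (hg12 : g12 = d12⁻¹ • z12) (hg13 : g13 = d13⁻¹ • z13)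
    (e12d e13d : ℝ)
    (e12b e13b : EuclideanSpace ℝ (Fin 2))
    (he12b : e12b = g12 - g12s) (he13b : e13b = g13 - g13s) :
    (Kb • e12b + Kb • e13b = 0 ∧ (-(Kd * e12d)) • z12 = 0 ∧ (-(Kd * e13d)) • z13 = 0) ↔
      (e12d = 0 ∧ e13d = 0 ∧
        ((g12 = g12s ∧ g13 = g13s) ∨ (g12 = g13s ∧ g13 = g12s))) := by
  have : Fact (finrank ℝ (EuclideanSpace ℝ (Fin 2)) = 2) := ⟨finrank_euclideanSpace_fin⟩
  have hz12₀ : z12 ≠ 0 := hz12 ▸ sub_ne_zero.mpr hp12.symm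
  have hz13₀ : z13 ≠ 0 := hz13 ▸ sub_ne_zero.mpr hp13.symm
  have hg12₁ : ‖g12‖ = 1 := hg12 ▸ hd12 ▸ norm_smul_inv_norm hz12₀
  have hg13₁ : ‖g13‖ = 1 := hg13 ▸ hd13 ▸ norm_smul_inv_norm hz13₀
  have hsum : g12s + g13s ≠ 0 := fun h => hne' (eq_neg_of_add_eq_zero_left h)
  rw [he12b, he13b, ← smul_add, sub_add_sub_comm, smul_eq_zero, sub_eq_zero,
    add_eq_add_iff_of_norm_eq_one hg12₁ hg13₁ hg12s hg13s hsum]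
  simp [hKb.ne', hKd.ne', hz12₀, hz13₀, and_comm, and_assoc]

/-- equilibria of the (1B2D) closed loop are exactly the
configurations where both distance errors vanish and the bearings are either
correct or flipped. -/
theorem stmt_13 (Kd Kb d12s d13s : ℝ) (hKd : 0 < Kd) (hKb : 0 < Kb)
    (hd12s : 0 < d12s) (hd13s : 0 < d13s)
    (g12s g13s : EuclideanSpace ℝ (Fin 2))
    (hg12s : ‖g12s‖ = 1) (hg13s : ‖g13s‖ = 1)
    (hne : g12s ≠ g13s) (hne' : g12s ≠ -g13s)
    (p₁ p₂ p₃ : EuclideanSpace ℝ (Fin 2)) (hp12 : p₁ ≠ p₂) (hp13 : p₁ ≠ p₃)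
    (z12 z13 : EuclideanSpace ℝ (Fin 2)) (hz12 : z12 = p₂ - p₁) (hz13 : z13 = p₃ - p₁)
    (d12 d13 : ℝ) (hd12 : d12 = ‖z12‖) (hd13 : d13 = ‖z13‖)
    (g12 g13 : EuclideanSpace ℝ (Fin 2)) (hg12 : g12 = d12⁻¹ • z12) (hg13 : g13 = d13⁻¹ • z13)
    (e12d e13d : ℝ) (he12d : e12d = d12 ^ 2 - d12s ^ 2) (he13d : e13d = d13 ^ 2 - d13s ^ 2)
    (e12b e13b : EuclideanSpace ℝ (Fin 2))
    (he12b : e12b = g12 - g12s) (he13b : e13b = g13 - g13s) :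
    (Kb • e12b + Kb • e13b = 0 ∧ (-(Kd * e12d)) • z12 = 0 ∧ (-(Kd * e13d)) • z13 = 0) ↔
      (e12d = 0 ∧ e13d = 0 ∧
        ((g12 = g12s ∧ g13 = g13s) ∨ (g12 = g13s ∧ g13 = g12s))) :=
  stmt_13_general Kd Kb hKd hKb g12s g13s hg12s hg13s hne' p₁ p₂ p₃ hp12 hp13 z12 z13 hz12 hz13 d12
    d13 hd12 hd13 g12 g13 hg12 hg13 e12d e13d e12b e13b he12b he13b
end

section
/- In the (1B2D) setup, suppose both links are stationary, i.e. K_d·e₁₂d·z₁₂ + K_b·(e₁₂b + e₁₃b) = 0 and K_d·e₁₃d·z₁₃ + K_b·(e₁₂b + e₁₃b) = 0. Then either (i) e₁₂d = 0, e₁₃d = 0 and (g₁₂, g₁₃) equals (g₁₂*, g₁₃*) or (g₁₃*, g₁₂*) (an equilibrium configuration), or (ii) the three robots are co-linear and aligned with the desired bearing sum: g₁₃ = g₁₂ or g₁₃ = −g₁₂, and there exists a nonzero real scalar ρ with g₁₂ = ρ·(g₁₂* + g₁₃*). -/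
/-!
If the bearing error `e₁₂b + e₁₃b` vanishes, the stationarity equations force both distance
errors to vanish and give `g₁₂ + g₁₃ = g₁₂* + g₁₃*`. In the plane, unit vectors are determined
up to order by a nonzero sum: `g₁₂ - g₁₂*`, `g₁₂ - g₁₃*` and `g₁₂* + g₁₃*` are pairwise
orthogonal, so one of the first two vanishes. Otherwise `z₁₂` and `z₁₃` are nonzero multiples
of the same nonzero vector `K_b • (e₁₂b + e₁₃b)`, so `g₁₃ = ±g₁₂`, and the first equation
becomes `c • g₁₂ = K_b • (g₁₂* + g₁₃*)`.
-/

open Module RealInnerProductSpace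

section InnerProductSpace

variable {E : Type*} [NormedAddCommGroup E] [InnerProductSpace ℝ E]

theorem eq_zero_or_eq_zero_of_inner_eq_zero_of_finrank_eq_two (hE : finrank ℝ E = 2)
    {x y s : E} (hs : s ≠ 0) (hxs : ⟪x, s⟫ = 0) (hys : ⟪y, s⟫ = 0) (hxy : ⟪x, y⟫ = 0) :
    x = 0 ∨ y = 0 := by
  by_contra! ⟨hx, hy⟩
  have : FiniteDimensional ℝ E := .of_finrank_pos (by omega)
  have hind : LinearIndependent ℝ ![x, y, s] := by
    refine linearIndependent_of_ne_zero_of_inner_eq_zero (fun i ↦ ?_) fun i j hij ↦ ?_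
    · fin_cases i <;> assumption
    · fin_cases i <;> fin_cases j <;> simp_all [real_inner_comm]
  simpa [hE] using hind.fintype_card_le_finrank

theorem eq_and_eq_or_eq_and_eq_of_add_eq_add (hE : finrank ℝ E = 2) {u v a b : E}
    (hu : ‖u‖ = 1) (hv : ‖v‖ = 1) (ha : ‖a‖ = 1) (hb : ‖b‖ = 1) (hab : a + b ≠ 0)
    (h : u + v = a + b) : (u = a ∧ v = b) ∨ (u = b ∧ v = a) := by
  obtain rfl : v = a + b - u := eq_sub_of_add_eq' h
  have inner_self {w : E} (hw : ‖w‖ = 1) : ⟪w, w⟫ = 1 := by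
    rw [real_inner_self_eq_norm_sq, hw, one_pow]
  have hsum : ⟪u, a⟫ + ⟪u, b⟫ = 1 + ⟪a, b⟫ := by
    have := inner_self hv
    simp only [inner_sub_left, inner_sub_right, inner_add_left, inner_add_right,
      real_inner_comm u, real_inner_comm a b, inner_self hu, inner_self ha, inner_self hb] at this
    linarith
  have hua : ⟪u - a, a + b⟫ = 0 := by
    simp only [inner_sub_left, inner_add_right, inner_self ha]; linarith
  have hub : ⟪u - b, a + b⟫ = 0 := by
    simp only [inner_sub_left, inner_add_right, inner_self hb, real_inner_comm a b]; linarith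
  have huab : ⟪u - a, u - b⟫ = 0 := by
    simp only [inner_sub_left, inner_sub_right, inner_self hu, real_inner_comm u a]; linarith
  rcases eq_zero_or_eq_zero_of_inner_eq_zero_of_finrank_eq_two hE hab hua hub huab with h | h
  · obtain rfl := sub_eq_zero.mp h
    simp
  · obtain rfl := sub_eq_zero.mp h
    simp

end InnerProductSpace

theorem exists_ne_zero_eq_smul_of_smul_eq_smul {K V : Type*} [Field K] [AddCommGroup V]
    [Module K V] {c k : K} {x t : V} (hk : k ≠ 0) (ht : t ≠ 0) (h : c • x = k • t) :
    ∃ ρ : K, ρ ≠ 0 ∧ x = ρ • t := by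
  have hc : c ≠ 0 := by
    rintro rfl
    exact smul_ne_zero hk ht (h ▸ zero_smul K x)
  exact ⟨c⁻¹ * k, mul_ne_zero (inv_ne_zero hc) hk, by rw [mul_smul, ← h, inv_smul_smul₀ hc]⟩

section NormedSpace

variable {F : Type*} [NormedAddCommGroup F] [NormedSpace ℝ F]

theorem norm_eq_one_and_eq_smul_of_eq_inv_norm_smul {z g : F} {d : ℝ} (hz : z ≠ 0)
    (hd : d = ‖z‖) (hg : g = d⁻¹ • z) : ‖g‖ = 1 ∧ z = d • g := by
  subst hd hg
  exact ⟨norm_smul_inv_norm hz, (smul_inv_smul₀ (norm_ne_zero_iff.mpr hz) z).symm⟩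

theorem smul_eq_self_or_eq_neg_of_norm_smul_eq {x : F} {μ : ℝ} (hx : x ≠ 0)
    (h : ‖μ • x‖ = ‖x‖) : μ • x = x ∨ μ • x = -x := by
  rw [norm_smul, Real.norm_eq_abs, mul_eq_right₀ (norm_ne_zero_iff.mpr hx)] at h
  rcases abs_eq (zero_le_one' ℝ) |>.mp h with rfl | rfl
  · exact .inl (one_smul ℝ x)
  · exact .inr (neg_one_smul ℝ x)

theorem aligned_of_stationary_of_bearing_error_ne_zero {c₁₂ c₁₃ Kb : ℝ}
    {g₁₂ g₁₃ g₁₂s g₁₃s : F} (hg₁₂ : ‖g₁₂‖ = 1) (hg₁₃ : ‖g₁₃‖ = 1) (hKb : Kb ≠ 0)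
    (hs : g₁₂s + g₁₃s ≠ 0) (he : g₁₂ - g₁₂s + (g₁₃ - g₁₃s) ≠ 0)
    (h₁₂ : c₁₂ • g₁₂ + Kb • (g₁₂ - g₁₂s + (g₁₃ - g₁₃s)) = 0)
    (h₁₃ : c₁₃ • g₁₃ + Kb • (g₁₂ - g₁₂s + (g₁₃ - g₁₃s)) = 0) :
    (g₁₃ = g₁₂ ∨ g₁₃ = -g₁₂) ∧ ∃ ρ : ℝ, ρ ≠ 0 ∧ g₁₂ = ρ • (g₁₂s + g₁₃s) := by
  have hc₁₃ : c₁₃ ≠ 0 := by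
    rintro rfl
    rw [zero_smul, zero_add] at h₁₃
    exact smul_ne_zero hKb he h₁₃
  set μ := c₁₃⁻¹ * c₁₂
  have hμ : g₁₃ = μ • g₁₂ := by
    rw [mul_smul, eq_inv_smul_iff₀ hc₁₃, eq_neg_of_add_eq_zero_left h₁₂,
      eq_neg_of_add_eq_zero_left h₁₃]
  refine ⟨hμ ▸ smul_eq_self_or_eq_neg_of_norm_smul_eq (norm_ne_zero_iff.mp (by simp [hg₁₂]))
    (by rw [← hμ, hg₁₂, hg₁₃]), exists_ne_zero_eq_smul_of_smul_eq_smul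
      (c := c₁₂ + Kb * (1 + μ)) hKb hs ?_⟩
  rw [hμ] at h₁₂
  linear_combination (norm := module) h₁₂

end NormedSpace

theorem stmt_14_general (Kd Kb : ℝ) (hKd : 0 < Kd) (hKb : 0 < Kb)
    (g12s g13s : EuclideanSpace ℝ (Fin 2))
    (hg12s : ‖g12s‖ = 1) (hg13s : ‖g13s‖ = 1)
    (hne' : g12s ≠ -g13s)
    (p₁ p₂ p₃ : EuclideanSpace ℝ (Fin 2)) (hp12 : p₁ ≠ p₂) (hp13 : p₁ ≠ p₃)
    (z12 z13 : EuclideanSpace ℝ (Fin 2)) (hz12 : z12 = p₂ - p₁) (hz13 : z13 = p₃ - p₁)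
    (d12 d13 : ℝ) (hd12 : d12 = ‖z12‖) (hd13 : d13 = ‖z13‖)
    (g12 g13 : EuclideanSpace ℝ (Fin 2)) (hg12 : g12 = d12⁻¹ • z12) (hg13 : g13 = d13⁻¹ • z13)
    (e12d e13d : ℝ)
    (e12b e13b : EuclideanSpace ℝ (Fin 2))
    (he12b : e12b = g12 - g12s) (he13b : e13b = g13 - g13s)
    (hstat12 : (Kd * e12d) • z12 + Kb • (e12b + e13b) = 0)
    (hstat13 : (Kd * e13d) • z13 + Kb • (e12b + e13b) = 0) :
    (e12d = 0 ∧ e13d = 0 ∧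
      ((g12 = g12s ∧ g13 = g13s) ∨ (g12 = g13s ∧ g13 = g12s))) ∨
    ((g13 = g12 ∨ g13 = -g12) ∧ ∃ ρ : ℝ, ρ ≠ 0 ∧ g12 = ρ • (g12s + g13s)) := by
  have hz12ne : z12 ≠ 0 := hz12 ▸ sub_ne_zero.mpr hp12.symm
  have hz13ne : z13 ≠ 0 := hz13 ▸ sub_ne_zero.mpr hp13.symm
  obtain ⟨hg12n, hz12g⟩ := norm_eq_one_and_eq_smul_of_eq_inv_norm_smul hz12ne hd12 hg12
  obtain ⟨hg13n, hz13g⟩ := norm_eq_one_and_eq_smul_of_eq_inv_norm_smul hz13ne hd13 hg13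
  have hs : g12s + g13s ≠ 0 := fun h ↦ hne' (eq_neg_of_add_eq_zero_left h)
  subst he12b he13b
  by_cases he : g12 - g12s + (g13 - g13s) = 0
  · have hsum : g12 + g13 = g12s + g13s := by rwa [sub_add_sub_comm, sub_eq_zero] at he
    exact .inl ⟨by simpa [he, hKd.ne', hz12ne] using hstat12,
      by simpa [he, hKd.ne', hz13ne] using hstat13,
      eq_and_eq_or_eq_and_eq_of_add_eq_add finrank_euclideanSpace_fin hg12n hg13n
        hg12s hg13s hs hsum⟩
  · rw [hz12g, smul_smul] at hstat12
    rw [hz13g, smul_smul] at hstat13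
    exact .inr <| aligned_of_stationary_of_bearing_error_ne_zero hg12n hg13n hKb.ne' hs he
      hstat12 hstat13

/-- if both links of the (1B2D) setup are stationary, then either
(i) the configuration is an equilibrium (correct or flipped), or (ii) the three
robots are co-linear and aligned with the direction of `g₁₂* + g₁₃*`. -/
theorem stmt_14 (Kd Kb d12s d13s : ℝ) (hKd : 0 < Kd) (hKb : 0 < Kb)
    (hd12s : 0 < d12s) (hd13s : 0 < d13s)
    (g12s g13s : EuclideanSpace ℝ (Fin 2))
    (hg12s : ‖g12s‖ = 1) (hg13s : ‖g13s‖ = 1)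
    (hne : g12s ≠ g13s) (hne' : g12s ≠ -g13s)
    (p₁ p₂ p₃ : EuclideanSpace ℝ (Fin 2)) (hp12 : p₁ ≠ p₂) (hp13 : p₁ ≠ p₃)
    (z12 z13 : EuclideanSpace ℝ (Fin 2)) (hz12 : z12 = p₂ - p₁) (hz13 : z13 = p₃ - p₁)
    (d12 d13 : ℝ) (hd12 : d12 = ‖z12‖) (hd13 : d13 = ‖z13‖)
    (g12 g13 : EuclideanSpace ℝ (Fin 2)) (hg12 : g12 = d12⁻¹ • z12) (hg13 : g13 = d13⁻¹ • z13)
    (e12d e13d : ℝ) (he12d : e12d = d12 ^ 2 - d12s ^ 2) (he13d : e13d = d13 ^ 2 - d13s ^ 2)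
    (e12b e13b : EuclideanSpace ℝ (Fin 2))
    (he12b : e12b = g12 - g12s) (he13b : e13b = g13 - g13s)
    (hstat12 : (Kd * e12d) • z12 + Kb • (e12b + e13b) = 0)
    (hstat13 : (Kd * e13d) • z13 + Kb • (e12b + e13b) = 0) :
    (e12d = 0 ∧ e13d = 0 ∧
      ((g12 = g12s ∧ g13 = g13s) ∨ (g12 = g13s ∧ g13 = g12s))) ∨
    ((g13 = g12 ∨ g13 = -g12) ∧ ∃ ρ : ℝ, ρ ≠ 0 ∧ g12 = ρ • (g12s + g13s)) :=
  stmt_14_general Kd Kb hKd hKb g12s g13s hg12s hg13s hne' p₁ p₂ p₃ hp12 hp13 z12 z13 hz12 hz13 d12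
    d13 hd12 hd13 g12 g13 hg12 hg13 e12d e13d e12b e13b he12b he13b hstat12 hstat13
end

section
/- Let s, t, x, y, p, q be real numbers and let (k,l) ∈ ℝ² be a unit vector (k² + l² = 1). Define the 4×4 real matrix A_M = −diag((s+1)x, (s+1)x, (t+1)p, (t+1)p) − N, where N has rows [(y−x)k², (y−x)kl, p·l², −p·kl], [(y−x)kl, (y−x)l², −p·kl, p·k²], [x·l², −x·kl, (q−p)k², (q−p)kl], [−x·kl, x·k², (q−p)kl, (q−p)l²]. Then the characteristic polynomial of A_M factors as det(λI₄ − A_M) = (λ + p·t + q)·(λ + x·s + y)·(λ² + BB·λ + CC), where BB = p(t+1) + x(s+1) and CC = p·x·((t+1)(s+1) − 1). -/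
/-!
Write `g = (k, l)` and `g⊥ = (-l, k)`. The coupling matrix `N` is a combination of the rank-one
matrices built from `(g, 0), (0, g), (g⊥, 0), (0, g⊥)`, and it couples only the two `g⊥`
directions, while the diagonal part is scalar on each factor `ℝ²`. Since `k ^ 2 + l ^ 2 = 1`
these four vectors form an orthonormal frame, in which `A_M` becomes
`diag (-(x s + y), -(p t + q)) ⊕ -[[(s + 1) x, p], [x, (t + 1) p]]`; the characteristic
polynomial is invariant under the change of frame and can be read off this decoupled form.
-/

open Polynomial

namespace Matrix

variable {R : Type*} [CommRing R]

theorem charpoly_mul_mul_of_mul_eq_one {n : Type*} [Fintype n] [DecidableEq n]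
    {P Q : Matrix n n R} (h : P * Q = 1) (B : Matrix n n R) :
    (Q * B * P).charpoly = B.charpoly := by
  rw [charpoly_mul_comm, ← mul_assoc, h, one_mul]

theorem charpoly_fin_four_decoupled (a d b c e f : R) :
    (!![a, 0, 0, 0; 0, d, 0, 0; 0, 0, b, c; 0, 0, e, f]).charpoly =
      (X - C a) * (X - C d) * (X ^ 2 - C (b + f) * X + C (b * f - c * e)) := by
  simp only [charpoly, det_succ_row_zero, submatrix_apply, Fin.succAbove, det_unique,
    Fin.default_eq_zero, Fin.reduceSucc, Fin.sum_univ_succ, Fin.coe_ofNat_eq_mod, ↓reduceIte,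
    Fin.reduceCastSucc, Fin.reduceLT, charmatrix_apply_eq, of_apply, cons_val, ne_eq, Fin.reduceEq,
    not_false_eq_true, charmatrix_apply_ne, map_zero, map_add, map_sub, map_mul]
  ring

/-- Columns `(g, 0), (0, g), (g⊥, 0), (0, g⊥)` for `g = (k, l)`, `g⊥ = (-l, k)`. -/
def rotFrame (k l : R) : Matrix (Fin 4) (Fin 4) R :=
  !![k, 0, -l, 0; l, 0, k, 0; 0, k, 0, -l; 0, l, 0, k]

theorem rotFrame_mul_transpose {k l : R} (hkl : k ^ 2 + l ^ 2 = 1) :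
    rotFrame k l * (rotFrame k l)ᵀ = 1 := by
  ext i j
  fin_cases i <;> fin_cases j <;>
    simp only [rotFrame, mul_apply, Fin.sum_univ_four, transpose_apply, one_apply, of_apply,
      cons_val', cons_val_zero, cons_val_one, cons_val, cons_val_fin_one, Fin.isValue,
      Fin.reduceFinMk, Fin.zero_eta, Fin.mk_one, Fin.reduceEq, if_true, if_false] <;> grind

theorem diagonal_mul_rotFrame (k l α β : R) :
    diagonal ![α, α, β, β] * rotFrame k l = rotFrame k l * diagonal ![α, β, α, β] := by
  ext i j
  fin_cases i <;> fin_cases j <;>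
    simp only [rotFrame, mul_apply, Fin.sum_univ_four, diagonal_apply, of_apply, cons_val',
      cons_val_zero, cons_val_one, cons_val, cons_val_fin_one, Fin.isValue, Fin.reduceFinMk,
      Fin.zero_eta, Fin.mk_one, Fin.reduceEq, if_true, if_false] <;> ring

theorem rotFrame_mul_mul_transpose (k l u v w z : R) :
    rotFrame k l * !![u, 0, 0, 0; 0, v, 0, 0; 0, 0, 0, w; 0, 0, z, 0] * (rotFrame k l)ᵀ =
      !![u * k ^ 2, u * (k * l), w * l ^ 2, -(w * (k * l));
         u * (k * l), u * l ^ 2, -(w * (k * l)), w * k ^ 2;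
         z * l ^ 2, -(z * (k * l)), v * k ^ 2, v * (k * l);
         -(z * (k * l)), z * k ^ 2, v * (k * l), v * l ^ 2] := by
  ext i j
  fin_cases i <;> fin_cases j <;>
    simp only [rotFrame, mul_apply, Fin.sum_univ_four, transpose_apply, of_apply, cons_val',
      cons_val_zero, cons_val_one, cons_val, cons_val_fin_one, Fin.isValue, Fin.reduceFinMk,
      Fin.zero_eta, Fin.mk_one] <;> ring

end Matrix

open Matrix in
/-- factorization of the characteristic polynomial of the
Jacobian of the (1B2D) link dynamics at a co-linear moving configuration. -/
theorem stmt_16 (s t x y p q k l : ℝ) (hkl : k ^ 2 + l ^ 2 = 1)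
    (A : Matrix (Fin 4) (Fin 4) ℝ)
    (hA : A = -(Matrix.diagonal ![(s + 1) * x, (s + 1) * x, (t + 1) * p, (t + 1) * p]) -
      !![(y - x) * k ^ 2, (y - x) * (k * l), p * l ^ 2, -(p * (k * l));
         (y - x) * (k * l), (y - x) * l ^ 2, -(p * (k * l)), p * k ^ 2;
         x * l ^ 2, -(x * (k * l)), (q - p) * k ^ 2, (q - p) * (k * l);
         -(x * (k * l)), x * k ^ 2, (q - p) * (k * l), (q - p) * l ^ 2]) :
    A.charpoly = (X + C (p * t + q)) * (X + C (x * s + y)) *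
      (X ^ 2 + C (p * (t + 1) + x * (s + 1)) * X +
        C (p * x * ((t + 1) * (s + 1) - 1))) := by
  have hQ : rotFrame k l * (rotFrame k l)ᵀ = 1 := rotFrame_mul_transpose hkl
  have hconj : A = rotFrame k l *
      (-diagonal ![(s + 1) * x, (t + 1) * p, (s + 1) * x, (t + 1) * p] -
        !![y - x, 0, 0, 0; 0, q - p, 0, 0; 0, 0, 0, p; 0, 0, x, 0]) * (rotFrame k l)ᵀ := by
    rw [hA, Matrix.mul_sub, Matrix.sub_mul, rotFrame_mul_mul_transpose, Matrix.mul_neg,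
      Matrix.neg_mul, ← diagonal_mul_rotFrame, mul_assoc, hQ, mul_one]
  have hdecoupled : -diagonal ![(s + 1) * x, (t + 1) * p, (s + 1) * x, (t + 1) * p] -
      !![y - x, 0, 0, 0; 0, q - p, 0, 0; 0, 0, 0, p; 0, 0, x, 0] =
      !![-(x * s + y), 0, 0, 0; 0, -(p * t + q), 0, 0;
        0, 0, -((s + 1) * x), -p; 0, 0, -x, -((t + 1) * p)] := by
    ext i j
    fin_cases i <;> fin_cases j <;>
      simp only [Matrix.sub_apply, Matrix.neg_apply, diagonal_apply, of_apply, cons_val',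
        cons_val_zero, cons_val_one, cons_val, cons_val_fin_one, Fin.isValue, Fin.reduceFinMk,
        Fin.zero_eta, Fin.mk_one, Fin.reduceEq, if_true, if_false] <;> ring
  rw [hconj, charpoly_mul_mul_of_mul_eq_one (mul_eq_one_comm.mp hQ), hdecoupled,
    charpoly_fin_four_decoupled]
  simp only [map_neg, map_add, map_sub, map_mul, map_one]
  ring
end

section
/- Let x, y, p, q > 0 be real numbers, let (k,l) ∈ ℝ² be a unit vector (k² + l² = 1), and let D be a real number with 0 < D < 2. Let (s,t) be one of the four pairs: (−2+D, −2+D), (−2−D, −2−D), (D, −D), (−D, D). Then the 4×4 real matrix A_M = −diag((s+1)x, (s+1)x, (t+1)p, (t+1)p) − N, where N has rows [(y−x)k², (y−x)kl, p·l², −p·kl], [(y−x)kl, (y−x)l², −p·kl, p·k²], [x·l², −x·kl, (q−p)k², (q−p)kl], [−x·kl, x·k², (q−p)kl, (q−p)l²], has a complex eigenvalue with positive real part; in particular A_M is not Hurwitz, so every co-linear moving configuration of the (1B2D) setup is unstable. -/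
/-!
Perturbing both links perpendicularly to the common direction `(k, l)`, i.e. by `(a • n, b • n)`
with `n = (-l, k)`, spans an `A_M`-invariant plane on which `A_M` acts by the `2 × 2` matrix
`!![-(s + 1) * x, -p; -x, -(t + 1) * p]`; the gains `y`, `q` act only along `(k, l)` and drop out.
In each of the four orderings this matrix has negative determinant or positive trace, so one of
its eigenvalues, which is also an eigenvalue of `A_M`, has positive real part.
-/

open Matrix Polynomial

theorem Matrix.isRoot_charpoly_of_mul_eq_mul {K m n : Type*} [Field K] [Fintype m] [Fintype n]
    [DecidableEq m] [DecidableEq n] {A : Matrix n n K} {B : Matrix n m K} {C : Matrix m m K}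
    {L : Matrix m n K} (hL : L * B = 1) (hAB : A * B = B * C) {μ : K}
    (hμ : C.charpoly.IsRoot μ) : A.charpoly.IsRoot μ := by
  rw [IsRoot, eval_charpoly] at hμ ⊢
  obtain ⟨w, hw, hCw⟩ := exists_mulVec_eq_zero_iff.mpr hμ
  have hshift : (scalar n μ - A) * B = B * (scalar m μ - C) := by
    rw [Matrix.sub_mul, Matrix.mul_sub, hAB]
    congr 1
    ext i j
    simp [mul_comm]
  refine exists_mulVec_eq_zero_iff.mp ⟨B *ᵥ w, fun hBw => hw ?_, ?_⟩
  · simpa [mulVec_mulVec, hL] using congrArg (L *ᵥ ·) hBw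
  · rw [mulVec_mulVec, hshift, ← mulVec_mulVec, hCw, mulVec_zero]

theorem Complex.exists_sq_eq_re_nonneg (d : ℂ) : ∃ r : ℂ, r ^ 2 = d ∧ 0 ≤ r.re := by
  obtain ⟨r, hr⟩ := IsAlgClosed.exists_pow_nat_eq d two_pos
  rcases le_total 0 r.re with h | h
  · exact ⟨r, hr, h⟩
  · exact ⟨-r, by rw [neg_sq, hr], by simpa using h⟩

theorem exists_quadratic_root_re_pos {T Δ : ℝ} (h : Δ < 0 ∨ 0 < T) :
    ∃ μ : ℂ, μ ^ 2 - T * μ + Δ = 0 ∧ 0 < μ.re := by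
  obtain ⟨r, hr, hr0⟩ := Complex.exists_sq_eq_re_nonneg (T ^ 2 - 4 * Δ)
  have hre : r.re ^ 2 - r.im ^ 2 = T ^ 2 - 4 * Δ := by
    simpa [sq, ← Complex.ofReal_pow] using congrArg Complex.re hr
  refine ⟨(T + r) / 2, by linear_combination hr / 4, ?_⟩
  have : -T < r.re := by
    rcases h with hΔ | hT
    · nlinarith [sq_nonneg r.im, sq_nonneg (r.re + T)]
    · linarith
  simp only [Complex.div_ofNat_re, Complex.add_re, Complex.ofReal_re]
  linarith

theorem Matrix.exists_isRoot_charpoly_re_pos_of_fin_two (C : Matrix (Fin 2) (Fin 2) ℝ)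
    (h : C.det < 0 ∨ 0 < C.trace) :
    ∃ μ : ℂ, (C.map (algebraMap ℝ ℂ)).charpoly.IsRoot μ ∧ 0 < μ.re := by
  obtain ⟨μ, hμ, hre⟩ := exists_quadratic_root_re_pos h
  refine ⟨μ, ?_, hre⟩
  simp only [charpoly_fin_two, trace_fin_two, det_fin_two, map_apply, Complex.coe_algebraMap,
    Complex.ofReal_add, Complex.ofReal_sub, Complex.ofReal_mul, IsRoot.def, eval_add, eval_sub,
    eval_pow, eval_X, eval_mul, eval_C] at hμ ⊢
  linear_combination hμ

def transverseFrame (k l : ℝ) : Matrix (Fin 4) (Fin 2) ℝ := !![-l, 0; k, 0; 0, -l; 0, k]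

def transverseJacobian (x p s t : ℝ) : Matrix (Fin 2) (Fin 2) ℝ :=
  !![-(s + 1) * x, -p; -x, -(t + 1) * p]

theorem transverseFrame_transpose_mul_self {k l : ℝ} (hkl : k ^ 2 + l ^ 2 = 1) :
    (transverseFrame k l)ᵀ * transverseFrame k l = 1 := by
  ext i j
  fin_cases i <;> fin_cases j <;> simp [transverseFrame, mul_apply, Fin.sum_univ_succ] <;> grind

theorem transverseJacobian_det_neg_or_trace_pos {x p D s t : ℝ} (hx : 0 < x) (hp : 0 < p)
    (hD0 : 0 < D) (hD2 : D < 2)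
    (hst : (s = -2 + D ∧ t = -2 + D) ∨ (s = -2 - D ∧ t = -2 - D) ∨
           (s = D ∧ t = -D) ∨ (s = -D ∧ t = D)) :
    (transverseJacobian x p s t).det < 0 ∨ 0 < (transverseJacobian x p s t).trace := by
  have hxp : 0 < x * p := mul_pos hx hp
  rcases hst with ⟨rfl, rfl⟩ | ⟨rfl, rfl⟩ | ⟨rfl, rfl⟩ | ⟨rfl, rfl⟩ <;>
    simp only [transverseJacobian, det_fin_two_of, trace_fin_two_of]
  · left; nlinarith [mul_pos hxp (mul_pos hD0 (sub_pos.2 hD2))]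
  · right; nlinarith [mul_pos hx hD0, mul_pos hp hD0]
  all_goals left; nlinarith [mul_pos hxp (mul_pos hD0 hD0)]

theorem stmt_17_general (x y p q k l D : ℝ)
    (hx : 0 < x) (hp : 0 < p)
    (hkl : k ^ 2 + l ^ 2 = 1) (hD0 : 0 < D) (hD2 : D < 2)
    (s t : ℝ)
    (hst : (s = -2 + D ∧ t = -2 + D) ∨ (s = -2 - D ∧ t = -2 - D) ∨
           (s = D ∧ t = -D) ∨ (s = -D ∧ t = D))
    (A : Matrix (Fin 4) (Fin 4) ℝ)
    (hA : A = -(Matrix.diagonal ![(s + 1) * x, (s + 1) * x, (t + 1) * p, (t + 1) * p]) -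
      !![(y - x) * k ^ 2, (y - x) * (k * l), p * l ^ 2, -(p * (k * l));
         (y - x) * (k * l), (y - x) * l ^ 2, -(p * (k * l)), p * k ^ 2;
         x * l ^ 2, -(x * (k * l)), (q - p) * k ^ 2, (q - p) * (k * l);
         -(x * (k * l)), x * k ^ 2, (q - p) * (k * l), (q - p) * l ^ 2]) :
    ∃ μ : ℂ, ((A.map (algebraMap ℝ ℂ)).charpoly).IsRoot μ ∧ 0 < μ.re := by
  set B := transverseFrame k l
  set C := transverseJacobian x p s t
  have hAB : A * B = B * C := by
    subst hA
    ext i j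
    fin_cases i <;> fin_cases j <;>
      simp [B, C, transverseFrame, transverseJacobian, mul_apply, Fin.sum_univ_succ] <;> grind
  obtain ⟨μ, hμ, hre⟩ := C.exists_isRoot_charpoly_re_pos_of_fin_two
    (transverseJacobian_det_neg_or_trace_pos hx hp hD0 hD2 hst)
  refine ⟨μ, isRoot_charpoly_of_mul_eq_mul (B := B.map (algebraMap ℝ ℂ))
    (L := Bᵀ.map (algebraMap ℝ ℂ)) ?_ ?_ hμ, hre⟩
  · rw [← Matrix.map_mul, transverseFrame_transpose_mul_self hkl,
      Matrix.map_one _ (map_zero _) (map_one _)]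
  · rw [← Matrix.map_mul, ← Matrix.map_mul, hAB]

/-- at each of the four co-linear moving configurations of the
(1B2D) setup, the Jacobian has a complex eigenvalue with positive real part; in
particular it is not Hurwitz, so every co-linear moving configuration is
unstable. -/
theorem stmt_17 (x y p q k l D : ℝ)
    (hx : 0 < x) (hy : 0 < y) (hp : 0 < p) (hq : 0 < q)
    (hkl : k ^ 2 + l ^ 2 = 1) (hD0 : 0 < D) (hD2 : D < 2)
    (s t : ℝ)
    (hst : (s = -2 + D ∧ t = -2 + D) ∨ (s = -2 - D ∧ t = -2 - D) ∨
           (s = D ∧ t = -D) ∨ (s = -D ∧ t = D))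
    (A : Matrix (Fin 4) (Fin 4) ℝ)
    (hA : A = -(Matrix.diagonal ![(s + 1) * x, (s + 1) * x, (t + 1) * p, (t + 1) * p]) -
      !![(y - x) * k ^ 2, (y - x) * (k * l), p * l ^ 2, -(p * (k * l));
         (y - x) * (k * l), (y - x) * l ^ 2, -(p * (k * l)), p * k ^ 2;
         x * l ^ 2, -(x * (k * l)), (q - p) * k ^ 2, (q - p) * (k * l);
         -(x * (k * l)), x * k ^ 2, (q - p) * (k * l), (q - p) * l ^ 2]) :
    ∃ μ : ℂ, ((A.map (algebraMap ℝ ℂ)).charpoly).IsRoot μ ∧ 0 < μ.re :=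
  stmt_17_general x y p q k l D hx hp hkl hD0 hD2 s t hst A hA
end

section
/- Let K_d, K_b > 0, set R = K_b/K_d and d̂ = √3·(R/2)^(1/3), and define h(ξ) = 2K_d·ξ² − K_b/ξ for ξ > 0. Suppose d* ≥ d̂ and let ξ be the largest real root of the cubic ξ³ − (d*)²·ξ + R = 0. Then ξ > 0, and: (i) if d* = d̂ then ξ = (R/2)^(1/3) and h(ξ) = 0; (ii) if d* > d̂ then ξ > (R/2)^(1/3) and h(ξ) > 0. -/
/-!
Put `c = (R/2)^(1/3)`, so that `R = 2c³` and `d̂² = 3c²`. The cubic `f(x) = x³ − d*²x + 2c³`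
satisfies `f(c) = c(3c² − d*²) ≤ 0` and `f → ∞`, so it has a root `≥ c`; hence the largest root
`ξ` is `≥ c > 0`. If `d* = d̂` then `f(x) = (x − c)²(x + 2c)` and `ξ = c`; if `d* > d̂` then
`f(c) < 0` and `ξ > c`. Finally `h(ξ) = 2K_d(ξ³ − c³)/ξ`, whose sign is that of `ξ − c`.
-/

open Filter Set

lemma tendsto_cubic_atTop (p q : ℝ) :
    Tendsto (fun x : ℝ => x ^ 3 - p * x + q) atTop atTop := by
  have h : Tendsto (fun x : ℝ => x * (x ^ 2 - p)) atTop atTop :=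
    tendsto_id.atTop_mul_atTop₀
      (tendsto_atTop_add_const_right _ _ (tendsto_pow_atTop two_ne_zero))
  exact tendsto_atTop_add_const_right _ q (h.congr fun x => by ring)

lemma exists_cubic_root_ge {p q a : ℝ} (ha : a ^ 3 - p * a + q ≤ 0) :
    ∃ η, a ≤ η ∧ η ^ 3 - p * η + q = 0 :=
  intermediate_value_Ici (by fun_prop) (tendsto_cubic_atTop p q) ha

lemma eq_of_cubic_double_root {c ξ : ℝ} (hc : 0 < c) (hcξ : c ≤ ξ)
    (hroot : ξ ^ 3 - 3 * c ^ 2 * ξ + 2 * c ^ 3 = 0) : ξ = c := by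
  have hfactor : (ξ - c) ^ 2 * (ξ + 2 * c) = 0 := by linear_combination hroot
  have hpos : ξ + 2 * c ≠ 0 := by linarith
  simpa [sub_eq_zero, hpos] using hfactor

lemma lt_of_cubic_root_ge {c p ξ : ℝ} (hc : 0 < c) (hp : 3 * c ^ 2 < p) (hcξ : c ≤ ξ)
    (hroot : ξ ^ 3 - p * ξ + 2 * c ^ 3 = 0) : c < ξ := by
  refine hcξ.lt_of_ne ?_
  rintro rfl
  nlinarith

lemma two_mul_sq_sub_div_eq {a b c ξ : ℝ} (hξ : ξ ≠ 0) (hb : b = 2 * a * c ^ 3) :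
    2 * a * ξ ^ 2 - b / ξ = 2 * a * (ξ ^ 3 - c ^ 3) / ξ := by
  field_simp
  rw [hb]
  ring

/-- properties of `h(ξ) = 2K_d·ξ² − K_b/ξ` at the largest real
root `ξ` of the cubic `ξ³ − (d*)²·ξ + R = 0` when `d* ≥ d̂ = √3·(R/2)^(1/3)`. -/
theorem stmt_19 (Kd Kb dstar ξ : ℝ) (hKd : 0 < Kd) (hKb : 0 < Kb)
    (R : ℝ) (hR : R = Kb / Kd)
    (dhat : ℝ) (hdhat : dhat = Real.sqrt 3 * (R / 2) ^ ((1 : ℝ) / 3))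
    (hds : dhat ≤ dstar)
    (hroot : ξ ^ 3 - dstar ^ 2 * ξ + R = 0)
    (hmax : ∀ η : ℝ, η ^ 3 - dstar ^ 2 * η + R = 0 → η ≤ ξ) :
    0 < ξ ∧
    (dstar = dhat → ξ = (R / 2) ^ ((1 : ℝ) / 3) ∧ 2 * Kd * ξ ^ 2 - Kb / ξ = 0) ∧
    (dhat < dstar → (R / 2) ^ ((1 : ℝ) / 3) < ξ ∧ 0 < 2 * Kd * ξ ^ 2 - Kb / ξ) := by
  have hRpos : 0 < R := hR ▸ div_pos hKb hKd
  set c := (R / 2) ^ ((1 : ℝ) / 3) with hc_def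
  have hc : 0 < c := by positivity
  have hRc : R = 2 * c ^ 3 := by
    rw [hc_def, ← Real.rpow_natCast, ← Real.rpow_mul (by positivity)]
    norm_num
    ring
  have hKbc : Kb = 2 * Kd * c ^ 3 := by
    rw [mul_right_comm, ← hRc, hR, div_mul_cancel₀ _ hKd.ne']
  have hdhat_sq : dhat ^ 2 = 3 * c ^ 2 := by rw [hdhat, mul_pow, Real.sq_sqrt zero_le_three]
  have hdhat_pos : 0 < dhat := by rw [hdhat]; positivity
  rw [hRc] at hroot hmax
  obtain ⟨η, hcη, hη⟩ := exists_cubic_root_ge (p := dstar ^ 2) (q := 2 * c ^ 3) (a := c) (by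
    nlinarith [hdhat_sq ▸ pow_le_pow_left₀ hdhat_pos.le hds 2])
  have hcξ : c ≤ ξ := hcη.trans (hmax η hη)
  have hξ : 0 < ξ := hc.trans_le hcξ
  rw [two_mul_sq_sub_div_eq hξ.ne' hKbc]
  refine ⟨hξ, fun heq => ?_, fun hlt => ?_⟩
  · have hξc : ξ = c := eq_of_cubic_double_root hc hcξ (by rwa [heq, hdhat_sq] at hroot)
    simp [hξc]
  · have hcξ' : c < ξ := lt_of_cubic_root_ge hc
      (hdhat_sq ▸ pow_lt_pow_left₀ hlt hdhat_pos.le two_ne_zero) hcξ hroot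
    have hcube : c ^ 3 < ξ ^ 3 := pow_lt_pow_left₀ hcξ' hc.le three_ne_zero
    exact ⟨hcξ', div_pos (mul_pos (by positivity) (sub_pos.2 hcube)) hξ⟩
end
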